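/- For f ∈ [0,1], the depolarized T gate, i.e. the channel Λ_{f,π/4}(ρ) = f · U ρ U† + (1 − f) · Tr(ρ) · I/2 with U = diag(e^{−iπ/8}, e^{iπ/8}), satisfies D(Λ_{f,π/4}) ≤ 1 if and only if f ≤ 2^{−1/2}; that is, the depolarized T gate is simulable by Pauli propagation exactly when its fidelity is at most 1/√2. -/

import Mathlib

open Matrix BigOperators Kronecker

noncomputable section

/-- The four single-qubit Pauli matrices `I, X, Y, Z`. -/
def pauli1 : Fin 4 → Matrix (Fin 2) (Fin 2) ℂ :=
  ![(1 : Matrix (Fin 2) (Fin 2) ℂ),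
    !![0, 1; 1, 0],
    !![0, -Complex.I; Complex.I, 0],
    !![1, 0; 0, -1]]

/-- Stabilizer norm of a single-qubit (2×2) matrix: `D(A) = (1/2) Σ_{σ ∈ P_1} |Tr(σ A)|`. -/
def stabNorm1 (A : Matrix (Fin 2) (Fin 2) ℂ) : ℝ :=
  (∑ i : Fin 4, ‖(pauli1 i * A).trace‖) / 2

/-- Channel stabilizer norm of a single-qubit channel: `D(Λ) = max_{σ ∈ P_1} D(Λ(σ))`. -/
def chanNorm1 (Λ : Matrix (Fin 2) (Fin 2) ℂ →ₗ[ℂ] Matrix (Fin 2) (Fin 2) ℂ) : ℝ :=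
  ⨆ i : Fin 4, stabNorm1 (Λ (pauli1 i))

/-- Pauli transfer matrix of a single-qubit channel: `(R_Λ)_{ij} = (1/2) Tr(σ_i Λ(σ_j))`. -/
def ptm1 (Λ : Matrix (Fin 2) (Fin 2) ℂ →ₗ[ℂ] Matrix (Fin 2) (Fin 2) ℂ) :
    Matrix (Fin 4) (Fin 4) ℂ :=
  Matrix.of fun i j => (pauli1 i * Λ (pauli1 j)).trace / 2

/-- The Z-rotation unitary `U = diag(e^{-iθ/2}, e^{iθ/2})`. -/
def rotZ (θ : ℝ) : Matrix (Fin 2) (Fin 2) ℂ :=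
  Matrix.diagonal ![Complex.exp (-((θ : ℂ) / 2) * Complex.I),
                    Complex.exp (((θ : ℂ) / 2) * Complex.I)]

/-!
Since `Tr(σᵢ σⱼ) = 2 δᵢⱼ`, the stabilizer norm of `A = ∑ cⱼ σⱼ` is the ℓ¹-norm `∑ |cⱼ|` of its
Pauli coefficients, so `D(Λ)` is the largest column ℓ¹-norm of the Pauli transfer matrix of `Λ`.
For the depolarized Z-rotation by `θ` this matrix is `1 ⊕ f·R(θ) ⊕ f`, with `R(θ)` the planar
rotation acting on `X, Y`, so `D(Λ) = max 1 (|f| (|cos θ| + |sin θ|))`; at `θ = π/4` this is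
`max 1 (√2 f)`.
-/

lemma trace_pauli1 (i : Fin 4) : (pauli1 i).trace = if i = 0 then 2 else 0 := by
  fin_cases i <;> simp [pauli1, trace_fin_two]

lemma trace_pauli1_mul_pauli1 (i j : Fin 4) :
    (pauli1 i * pauli1 j).trace = if i = j then 2 else 0 := by
  fin_cases i <;> fin_cases j <;> simp [pauli1, trace_fin_two, one_add_one_eq_two]

lemma stabNorm1_sum_smul_pauli1 (c : Fin 4 → ℂ) :
    stabNorm1 (∑ j, c j • pauli1 j) = ∑ j, ‖c j‖ := by
  have htrace (i : Fin 4) : (pauli1 i * ∑ j, c j • pauli1 j).trace = 2 * c i := by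
    simp [Matrix.mul_sum, trace_sum, trace_pauli1_mul_pauli1, mul_comm]
  simp only [stabNorm1, htrace, norm_mul, Complex.norm_two, ← Finset.mul_sum]
  ring

lemma chanNorm1_eq_iSup_sum_norm {Λ : Matrix (Fin 2) (Fin 2) ℂ →ₗ[ℂ] Matrix (Fin 2) (Fin 2) ℂ}
    {R : Matrix (Fin 4) (Fin 4) ℂ} (hR : ∀ j, Λ (pauli1 j) = ∑ i, R i j • pauli1 i) :
    chanNorm1 Λ = ⨆ j, ∑ i, ‖R i j‖ := by
  simp only [chanNorm1, hR, stabNorm1_sum_smul_pauli1]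

lemma conjTranspose_rotZ (θ : ℝ) : (rotZ θ)ᴴ = rotZ (-θ) := by
  ext i j
  fin_cases i <;> fin_cases j <;>
    simp [rotZ, ← Complex.exp_conj, Complex.conj_ofReal, map_ofNat] <;> ring_nf

lemma rotZ_mul_mul_conjTranspose (θ : ℝ) (ρ : Matrix (Fin 2) (Fin 2) ℂ) :
    rotZ θ * ρ * (rotZ θ)ᴴ =
      !![ρ 0 0, Complex.exp (-θ * Complex.I) * ρ 0 1;
         Complex.exp (θ * Complex.I) * ρ 1 0, ρ 1 1] := by
  ext i j
  rw [conjTranspose_rotZ, rotZ, rotZ, mul_diagonal, diagonal_mul]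
  fin_cases i <;> fin_cases j <;>
    simp [mul_right_comm _ (ρ _ _), ← Complex.exp_add] <;> ring_nf <;> simp

lemma rotZ_conj_pauliX (θ : ℝ) :
    rotZ θ * pauli1 1 * (rotZ θ)ᴴ = (Real.cos θ : ℂ) • pauli1 1 + (Real.sin θ : ℂ) • pauli1 2 := by
  rw [rotZ_mul_mul_conjTranspose, Complex.exp_mul_I, Complex.exp_mul_I, Complex.cos_neg,
    Complex.sin_neg]
  ext i j
  fin_cases i <;> fin_cases j <;> simp [pauli1]

lemma rotZ_conj_pauliY (θ : ℝ) :
    rotZ θ * pauli1 2 * (rotZ θ)ᴴ = (-Real.sin θ : ℂ) • pauli1 1 + (Real.cos θ : ℂ) • pauli1 2 := by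
  rw [rotZ_mul_mul_conjTranspose, Complex.exp_mul_I, Complex.exp_mul_I, Complex.cos_neg,
    Complex.sin_neg]
  ext i j
  fin_cases i <;> fin_cases j <;> simp [pauli1] <;> ring_nf <;> simp [Complex.I_sq] <;> ring

lemma rotZ_conj_pauliZ (θ : ℝ) : rotZ θ * pauli1 3 * (rotZ θ)ᴴ = pauli1 3 := by
  rw [rotZ_mul_mul_conjTranspose]
  ext i j
  fin_cases i <;> fin_cases j <;> simp [pauli1]

lemma rotZ_mul_conjTranspose (θ : ℝ) : rotZ θ * (rotZ θ)ᴴ = 1 := by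
  have h := rotZ_mul_mul_conjTranspose θ 1
  rw [mul_one] at h
  rw [h]
  ext i j
  fin_cases i <;> fin_cases j <;> simp

def depolarizedRotZ (f θ : ℝ) (ρ : Matrix (Fin 2) (Fin 2) ℂ) : Matrix (Fin 2) (Fin 2) ℂ :=
  (f : ℂ) • (rotZ θ * ρ * (rotZ θ)ᴴ) +
    ((1 - f : ℝ) : ℂ) • (ρ.trace • ((2 : ℂ)⁻¹ • (1 : Matrix (Fin 2) (Fin 2) ℂ)))

def depolarizedRotZPTM (f θ : ℝ) : Matrix (Fin 4) (Fin 4) ℂ :=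
  !![1, 0, 0, 0;
     0, f * Real.cos θ, -(f * Real.sin θ), 0;
     0, f * Real.sin θ, f * Real.cos θ, 0;
     0, 0, 0, f]

lemma depolarizedRotZ_pauli1 (f θ : ℝ) (j : Fin 4) :
    depolarizedRotZ f θ (pauli1 j) = ∑ i, depolarizedRotZPTM f θ i j • pauli1 i := by
  have hI : pauli1 0 = 1 := rfl
  fin_cases j <;>
    simp [depolarizedRotZ, depolarizedRotZPTM, Fin.sum_univ_four, trace_pauli1, hI,
      rotZ_mul_conjTranspose, rotZ_conj_pauliX, rotZ_conj_pauliY, rotZ_conj_pauliZ] <;>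
    module

lemma one_le_abs_cos_add_abs_sin (θ : ℝ) : 1 ≤ |Real.cos θ| + |Real.sin θ| := by
  nlinarith [abs_mul_abs_self (Real.cos θ), abs_mul_abs_self (Real.sin θ),
    Real.sin_sq_add_cos_sq θ, abs_nonneg (Real.cos θ), abs_nonneg (Real.sin θ)]

lemma iSup_sum_norm_depolarizedRotZPTM (f θ : ℝ) :
    ⨆ j, ∑ i, ‖depolarizedRotZPTM f θ i j‖ = max 1 (|f| * (|Real.cos θ| + |Real.sin θ|)) := by
  have hcol (j : Fin 4) : ∑ i, ‖depolarizedRotZPTM f θ i j‖ =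
      ![1, |f| * (|Real.cos θ| + |Real.sin θ|), |f| * (|Real.cos θ| + |Real.sin θ|), |f|] j := by
    fin_cases j <;>
      simp [depolarizedRotZPTM, Fin.sum_univ_four, -Complex.ofReal_cos, -Complex.ofReal_sin,
        Complex.norm_real] <;> ring
  have hbdd : BddAbove (Set.range fun j ↦ ∑ i, ‖depolarizedRotZPTM f θ i j‖) :=
    (Set.finite_range _).bddAbove
  have hZ : |f| ≤ |f| * (|Real.cos θ| + |Real.sin θ|) :=
    le_mul_of_one_le_right (abs_nonneg f) (one_le_abs_cos_add_abs_sin θ)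
  refine le_antisymm (ciSup_le fun j ↦ ?_) (max_le ?_ ?_)
  · fin_cases j <;> simp [hcol, hZ]
  · exact le_ciSup_of_le hbdd 0 (by simp [hcol])
  · exact le_ciSup_of_le hbdd 1 (by simp [hcol])

/-- The depolarized `T` gate, i.e. the channel
`Λ_{f,π/4}(ρ) = f · U ρ U† + (1 − f) Tr(ρ) I/2` with `U = diag(e^{-iπ/8}, e^{iπ/8})`,
satisfies `D(Λ_{f,π/4}) ≤ 1` if and only if `f ≤ 1/√2`. -/
theorem depolarized_T_simulable_iff (f : ℝ) (hf : f ∈ Set.Icc (0 : ℝ) 1)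
    (Λ : Matrix (Fin 2) (Fin 2) ℂ →ₗ[ℂ] Matrix (Fin 2) (Fin 2) ℂ)
    (hΛ : ∀ ρ : Matrix (Fin 2) (Fin 2) ℂ,
      Λ ρ = (f : ℂ) • (rotZ (Real.pi / 4) * ρ * (rotZ (Real.pi / 4))ᴴ) +
            ((1 - f : ℝ) : ℂ) • (ρ.trace • ((2 : ℂ)⁻¹ • (1 : Matrix (Fin 2) (Fin 2) ℂ)))) :
    chanNorm1 Λ ≤ 1 ↔ f ≤ (Real.sqrt 2)⁻¹ := by
  have hR (j : Fin 4) : Λ (pauli1 j) = ∑ i, depolarizedRotZPTM f (Real.pi / 4) i j • pauli1 i :=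
    (hΛ _).trans (depolarizedRotZ_pauli1 f _ j)
  have hsqrt2 : |Real.sqrt 2 / 2| + |Real.sqrt 2 / 2| = Real.sqrt 2 := by
    rw [abs_of_pos (by positivity)]
    ring
  rw [chanNorm1_eq_iSup_sum_norm hR, iSup_sum_norm_depolarizedRotZPTM, Real.cos_pi_div_four,
    Real.sin_pi_div_four, hsqrt2, abs_of_nonneg hf.1, max_le_iff, inv_eq_one_div,
    le_div_iff₀ (by positivity)]
  exact and_iff_right le_rfl
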